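/- For a p/t-net S and distinct transitions a, b ∈ T: if for every reachable marking M with both a and b enabled in M there exists v ∈ T* with the string avb enabled in M (i.e., a never kills an enabled b), then there exists k ∈ ℕ such that for every reachable marking M with both a and b enabled in M there exists w ∈ T* with |w| ≤ k and the string awb enabled in M. -/

import Mathlib

open Classical in
/-- The marking obtained by firing transition `a` in marking `M`:
tokens are removed from entries of `a` and added to exits of `a`. -/
noncomputable def fire {P T : Type} (Fpt : P → T → Prop) (Ftp : T → P → Prop)
    (M : P → ℕ) (a : T) : P → ℕ :=
  fun p => M p - (if Fpt p a then 1 else 0) + (if Ftp a p then 1 else 0)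

/-- Transition `a` is enabled in marking `M` (all its entries are marked). -/
def Enabled {P T : Type} (Fpt : P → T → Prop) (M : P → ℕ) (a : T) : Prop :=
  ∀ p, Fpt p a → 1 ≤ M p

/-- `Fires Fpt Ftp M w M'` means the string `w` is enabled in `M` and its
execution leads from `M` to `M'` (the predicate `M w M'`). -/
inductive Fires {P T : Type} (Fpt : P → T → Prop) (Ftp : T → P → Prop) :
    (P → ℕ) → List T → (P → ℕ) → Prop
  | nil (M : P → ℕ) : Fires Fpt Ftp M [] M
  | cons {M M'' : P → ℕ} {a : T} {w : List T} :
      Enabled Fpt M a → Fires Fpt Ftp (fire Fpt Ftp M a) w M'' →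
      Fires Fpt Ftp M (a :: w) M''

/-- The string `w` is enabled in marking `M` (the predicate `M w`). -/
def EnabledSeq {P T : Type} (Fpt : P → T → Prop) (Ftp : T → P → Prop)
    (M : P → ℕ) (w : List T) : Prop :=
  ∃ M', Fires Fpt Ftp M w M'

/-- `M` is reachable from the initial marking `M0`. -/
def Reachable {P T : Type} (Fpt : P → T → Prop) (Ftp : T → P → Prop)
    (M0 M : P → ℕ) : Prop :=
  ∃ w : List T, Fires Fpt Ftp M0 w M

/-!
Firing is monotone in the marking, so the least length `n(M)` of a `w` with `a w b` enabled in
`M` can only decrease as `M` grows. By Dickson's lemma the markings `P → ℕ` are well-quasi-ordered,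
and a function into `ℕ` that is antitone on a partially well-ordered set is bounded: along an
increasing subsequence of markings its values decrease, so they cannot exceed every bound.
-/

theorem Set.IsPWO.bddAbove_image_of_antitoneOn {α : Type*} [Preorder α] {s : Set α}
    (hs : s.IsPWO) {f : α → ℕ} (hf : AntitoneOn f s) : BddAbove (f '' s) := by
  by_contra hunbdd
  have hlarge : ∀ n : ℕ, ∃ x ∈ s, n < f x := by
    intro n
    by_contra! hle
    exact hunbdd ⟨n, by rintro _ ⟨x, hx, rfl⟩; exact hle x hx⟩
  choose x hxs hxf using hlarge
  obtain ⟨g, hmono⟩ := hs.exists_monotone_subseq hxs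
  set m := f (x (g 0))
  have hdecr : f (x (g m)) ≤ m := hf (hxs _) (hxs _) (hmono (Nat.zero_le m))
  have hgrow : m < f (x (g m)) := (g.strictMono.id_le m).trans_lt (hxf (g m))
  omega

theorem Set.IsPWO.exists_uniform_bound {α : Type*} [Preorder α] {s : Set α} (hs : s.IsPWO)
    {R : α → ℕ → Prop} (hR : ∀ ⦃x y : α⦄ ⦃n : ℕ⦄, x ≤ y → R x n → R y n)
    (hex : ∀ x ∈ s, ∃ n, R x n) : ∃ k, ∀ x ∈ s, ∃ n ≤ k, R x n := by
  let f : α → ℕ := fun x => sInf {n | R x n}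
  have hf : AntitoneOn f s := fun x hx y _ hxy =>
    Nat.sInf_le (hR hxy (Nat.sInf_mem (hex x hx)))
  obtain ⟨k, hk⟩ := hs.bddAbove_image_of_antitoneOn hf
  exact ⟨k, fun x hx => ⟨f x, hk ⟨x, hx, rfl⟩, Nat.sInf_mem (hex x hx)⟩⟩

section Monotonicity

variable {P T : Type} {Fpt : P → T → Prop} {Ftp : T → P → Prop}

theorem Enabled.mono {M M' : P → ℕ} {a : T} (ha : Enabled Fpt M a) (hle : M ≤ M') :
    Enabled Fpt M' a :=
  fun p hp => (ha p hp).trans (hle p)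

theorem fire_mono {M M' : P → ℕ} (hle : M ≤ M') (a : T) :
    fire Fpt Ftp M a ≤ fire Fpt Ftp M' a := by
  intro p
  have : M p ≤ M' p := hle p
  simp only [fire]
  omega

theorem Fires.exists_of_le {M N M' : P → ℕ} {w : List T} (hw : Fires Fpt Ftp M w N)
    (hle : M ≤ M') : ∃ N', Fires Fpt Ftp M' w N' := by
  induction hw generalizing M' with
  | nil => exact ⟨M', Fires.nil M'⟩
  | cons ha _ ih =>
    obtain ⟨N', hN'⟩ := ih (fire_mono hle _)
    exact ⟨N', Fires.cons (ha.mono hle) hN'⟩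

theorem EnabledSeq.mono {M M' : P → ℕ} {w : List T} (hw : EnabledSeq Fpt Ftp M w)
    (hle : M ≤ M') : EnabledSeq Fpt Ftp M' w :=
  let ⟨_, hN⟩ := hw
  hN.exists_of_le hle

end Monotonicity

theorem exists_uniform_postpone_bound_general {P T : Type} [Fintype P]
    (Fpt : P → T → Prop) (Ftp : T → P → Prop) (M0 : P → ℕ)
    (a b : T)
    (h : ∀ M : P → ℕ, Reachable Fpt Ftp M0 M →
      Enabled Fpt M a → Enabled Fpt M b →
      ∃ v : List T, EnabledSeq Fpt Ftp M (a :: (v ++ [b]))) :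
    ∃ k : ℕ, ∀ M : P → ℕ, Reachable Fpt Ftp M0 M →
      Enabled Fpt M a → Enabled Fpt M b →
      ∃ w : List T, w.length ≤ k ∧ EnabledSeq Fpt Ftp M (a :: (w ++ [b])) := by
  let s : Set (P → ℕ) :=
    {M | Reachable Fpt Ftp M0 M ∧ Enabled Fpt M a ∧ Enabled Fpt M b}
  obtain ⟨k, hk⟩ := (Set.isPWO_of_wellQuasiOrderedLE s).exists_uniform_bound
    (R := fun M n => ∃ w : List T, w.length = n ∧ EnabledSeq Fpt Ftp M (a :: (w ++ [b])))
    (fun _ _ _ hle ⟨w, hlen, hw⟩ => ⟨w, hlen, hw.mono hle⟩)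
    (fun M ⟨hM, ha, hb⟩ => let ⟨v, hv⟩ := h M hM ha hb; ⟨v.length, v, rfl, hv⟩)
  refine ⟨k, fun M hM ha hb => ?_⟩
  obtain ⟨n, hnk, w, rfl, hw⟩ := hk M ⟨hM, ha, hb⟩
  exact ⟨w, hnk, hw⟩

/-- If in a p/t-net the action `a` never kills an enabled `b`, then there is a
uniform bound `k`: in every reachable marking enabling both `a` and `b`, the
execution of `a` postpones `b` for at most `k` steps. -/
theorem exists_uniform_postpone_bound {P T : Type} [Fintype P] [Fintype T]
    (Fpt : P → T → Prop) (Ftp : T → P → Prop) (M0 : P → ℕ)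
    (a b : T) (hab : a ≠ b)
    (h : ∀ M : P → ℕ, Reachable Fpt Ftp M0 M →
      Enabled Fpt M a → Enabled Fpt M b →
      ∃ v : List T, EnabledSeq Fpt Ftp M (a :: (v ++ [b]))) :
    ∃ k : ℕ, ∀ M : P → ℕ, Reachable Fpt Ftp M0 M →
      Enabled Fpt M a → Enabled Fpt M b →
      ∃ w : List T, w.length ≤ k ∧ EnabledSeq Fpt Ftp M (a :: (w ++ [b])) :=
  exists_uniform_postpone_bound_general Fpt Ftp M0 a b h
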